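/- (Distortion lemma) Let $\varphi_i:\mathcal E_{\sigma^i\omega}\to\mathbb C$ for $0\le i\le n-1$ satisfy $v_{\alpha,\xi}(\varphi_i)\le H_{\sigma^i\omega}$, and set $\mathcal S_n^\omega\varphi = \sum_{j=0}^{n-1}\varphi_j\circ f_\omega^j$. Let $x,x'\in\mathcal E_{\sigma^n\omega}$ with $\rho(x,x')<\xi$ and let $y_i,y_i'$ be the paired preimages under $f_\omega^n$. Then for each $i$, $|\mathcal S_n^\omega\varphi(y_i)-\mathcal S_n^\omega\varphi(y_i')|\le \rho^\alpha(x,x')\, Q_{\sigma^n\omega}(H)$, where $Q_\omega(H)=\sum_{j=1}^\infty H_{\sigma^{-j}\omega}(\gamma_{\sigma^{-j}\omega,j})^{-\alpha}$. -/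
import Mathlib


open Function Finset

/-- **Distortion lemma.** If `φ_j` has local Hölder constant at most
`H_{σ^j ω}` on the fiber over `σ^j ω` and `y, y'` are paired preimages of nearby points
`x, x'` under `f_ω^n`, then
`|𝒮ₙ^ω φ (y) - 𝒮ₙ^ω φ (y')| ≤ ρ(x,x')^α · Q_{σ^n ω}(H)`, where
`Q_ω(H) = ∑_{j≥1} H_{σ^{-j}ω} (γ_{σ^{-j}ω, j})^{-α}`. -/
theorem distortion_lemma
    {Ω X : Type*} [MetricSpace X]
    (σ σinv : Ω → Ω) (hinv : ∀ ω, σ (σinv ω) = ω) (hinv' : ∀ ω, σinv (σ ω) = ω)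
    (Efib : Ω → Set X) (f : Ω → X → X)
    (hmaps : ∀ ω x, x ∈ Efib ω → f ω x ∈ Efib (σ ω))
    (ξ α : ℝ) (hξ : 0 < ξ) (hα : 0 < α) (hα1 : α ≤ 1)
    (γ : Ω → ℝ) (hγ : ∀ ω, 1 < γ ω)
    (H : Ω → ℝ) (hH : ∀ ω, 1 ≤ H ω)
    (fIter : ℕ → Ω → X → X)
    (hIter0 : ∀ ω, fIter 0 ω = id)
    (hIterS : ∀ n ω, fIter (n + 1) ω = f (σ^[n] ω) ∘ fIter n ω)
    (Q : Ω → ℝ)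
    (hQ : ∀ ω, Q ω = ∑' j : ℕ, H (σinv^[j + 1] ω) *
      ((∏ l ∈ Finset.range (j + 1), γ (σ^[l] (σinv^[j + 1] ω))) ^ α)⁻¹)
    (hQsum : ∀ ω, Summable fun j : ℕ => H (σinv^[j + 1] ω) *
      ((∏ l ∈ Finset.range (j + 1), γ (σ^[l] (σinv^[j + 1] ω))) ^ α)⁻¹)
    (ω : Ω) (n : ℕ) (φ : ℕ → X → ℂ)
    (hφ : ∀ j < n, ∀ x ∈ Efib (σ^[j] ω), ∀ x' ∈ Efib (σ^[j] ω), dist x x' < ξ →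
      ‖φ j x - φ j x'‖ ≤ H (σ^[j] ω) * dist x x' ^ α)
    (x x' : X) (hx : x ∈ Efib (σ^[n] ω)) (hx' : x' ∈ Efib (σ^[n] ω))
    (hxx : dist x x' < ξ)
    (y y' : X) (hy : y ∈ Efib ω) (hy' : y' ∈ Efib ω)
    (hyx : fIter n ω y = x) (hyx' : fIter n ω y' = x')
    (hpairdist : ∀ j < n, dist (fIter j ω y) (fIter j ω y') ≤
      (∏ l ∈ Finset.Ico j n, γ (σ^[l] ω))⁻¹ * dist x x') :
    ‖(∑ j ∈ Finset.range n, φ j (fIter j ω y)) -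
        ∑ j ∈ Finset.range n, φ j (fIter j ω y')‖ ≤
      dist x x' ^ α * Q (σ^[n] ω) := by

  classical
  set d := dist x x' with hd
  have hd0 : 0 ≤ d := dist_nonneg
  -- fibers
  have hfib : ∀ j, fIter j ω y ∈ Efib (σ^[j] ω) ∧ fIter j ω y' ∈ Efib (σ^[j] ω) := by
    intro j
    induction j with
    | zero => simp [hIter0, hy, hy']
    | succ k ih =>
      rw [hIterS, Function.iterate_succ_apply']
      exact ⟨hmaps _ _ ih.1, hmaps _ _ ih.2⟩
  -- inverse iterate
  have hinvIter : ∀ k (ω' : Ω), σinv^[k] (σ^[k] ω') = ω' := by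
    intro k
    induction k with
    | zero => intro ω'; simp
    | succ m ih =>
      intro ω'
      rw [Function.iterate_succ_apply' σ, Function.iterate_succ_apply σinv,
        hinv', ih]
  have hprod_pos : ∀ j, 0 < ∏ l ∈ Finset.Ico j n, γ (σ^[l] ω) := by
    intro j
    exact Finset.prod_pos fun l _ => lt_trans one_pos (hγ _)
  have hprod_ge1 : ∀ j, 1 ≤ ∏ l ∈ Finset.Ico j n, γ (σ^[l] ω) := by
    intro j
    calc (1:ℝ) = ∏ _l ∈ Finset.Ico j n, (1:ℝ) := by simp
      _ ≤ ∏ l ∈ Finset.Ico j n, γ (σ^[l] ω) :=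
          Finset.prod_le_prod (fun _ _ => zero_le_one) (fun l _ => (hγ _).le)
  -- per-term bound
  have key : ∀ j < n, ‖φ j (fIter j ω y) - φ j (fIter j ω y')‖ ≤
      d ^ α * (H (σ^[j] ω) * ((∏ l ∈ Finset.Ico j n, γ (σ^[l] ω)) ^ α)⁻¹) := by
    intro j hj
    set P := ∏ l ∈ Finset.Ico j n, γ (σ^[l] ω) with hP
    have hPpos := hprod_pos j
    have hP1 := hprod_ge1 j
    have hdj : dist (fIter j ω y) (fIter j ω y') ≤ P⁻¹ * d := hpairdist j hj
    have hinvle1 : P⁻¹ ≤ 1 := inv_le_one_of_one_le₀ hP1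
    have hdjlt : dist (fIter j ω y) (fIter j ω y') < ξ := by
      calc dist (fIter j ω y) (fIter j ω y') ≤ P⁻¹ * d := hdj
        _ ≤ 1 * d := by
            apply mul_le_mul_of_nonneg_right hinvle1 hd0
        _ = d := one_mul d
        _ < ξ := hxx
    have h1 := hφ j hj _ (hfib j).1 _ (hfib j).2 hdjlt
    have h2 : dist (fIter j ω y) (fIter j ω y') ^ α ≤ (P⁻¹ * d) ^ α :=
      Real.rpow_le_rpow dist_nonneg hdj hα.le
    have h3 : (P⁻¹ * d) ^ α = (P ^ α)⁻¹ * d ^ α := by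
      rw [Real.mul_rpow (inv_nonneg.2 hPpos.le) hd0, Real.inv_rpow hPpos.le]
    have hHnn : 0 ≤ H (σ^[j] ω) := le_trans zero_le_one (hH _)
    calc ‖φ j (fIter j ω y) - φ j (fIter j ω y')‖
        ≤ H (σ^[j] ω) * dist (fIter j ω y) (fIter j ω y') ^ α := h1
      _ ≤ H (σ^[j] ω) * ((P ^ α)⁻¹ * d ^ α) := by
          apply mul_le_mul_of_nonneg_left _ hHnn
          rw [← h3]; exact h2
      _ = d ^ α * (H (σ^[j] ω) * (P ^ α)⁻¹) := by ring
  -- sum bound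
  have hsum : ‖(∑ j ∈ Finset.range n, φ j (fIter j ω y)) -
        ∑ j ∈ Finset.range n, φ j (fIter j ω y')‖ ≤
      ∑ j ∈ Finset.range n,
        d ^ α * (H (σ^[j] ω) * ((∏ l ∈ Finset.Ico j n, γ (σ^[l] ω)) ^ α)⁻¹) := by
    rw [← Finset.sum_sub_distrib]
    refine le_trans (norm_sum_le _ _) (Finset.sum_le_sum ?_)
    intro j hj
    exact key j (Finset.mem_range.1 hj)
  -- identify with Q terms
  set T : ℕ → ℝ := fun j => H (σinv^[j + 1] (σ^[n] ω)) *
      ((∏ l ∈ Finset.range (j + 1), γ (σ^[l] (σinv^[j + 1] (σ^[n] ω)))) ^ α)⁻¹ with hT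
  have hident : ∀ j < n,
      H (σ^[j] ω) * ((∏ l ∈ Finset.Ico j n, γ (σ^[l] ω)) ^ α)⁻¹ = T (n - 1 - j) := by
    intro j hj
    have hk : n - 1 - j + 1 = n - j := by omega
    have hσ : σinv^[n - j] (σ^[n] ω) = σ^[j] ω := by
      have : σ^[n] ω = σ^[n - j] (σ^[j] ω) := by
        rw [← Function.iterate_add_apply]
        congr 1
        omega
      rw [this, hinvIter]
    have hprodeq : ∏ l ∈ Finset.Ico j n, γ (σ^[l] ω) =
        ∏ l ∈ Finset.range (n - j), γ (σ^[l] (σ^[j] ω)) := by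
      rw [Finset.prod_Ico_eq_prod_range]
      apply Finset.prod_congr rfl
      intro l _
      rw [Nat.add_comm j l, Function.iterate_add_apply]
    simp only [hT, hk, hσ, hprodeq]
  have hreflect : ∑ j ∈ Finset.range n,
      H (σ^[j] ω) * ((∏ l ∈ Finset.Ico j n, γ (σ^[l] ω)) ^ α)⁻¹ =
      ∑ j ∈ Finset.range n, T j := by
    rw [← Finset.sum_range_reflect T n]
    apply Finset.sum_congr rfl
    intro j hj
    exact hident j (Finset.mem_range.1 hj)
  have hTnn : ∀ j, 0 ≤ T j := by
    intro j
    apply mul_nonneg (le_trans zero_le_one (hH _))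
    apply inv_nonneg.2
    apply Real.rpow_nonneg
    exact Finset.prod_nonneg fun l _ => le_trans zero_le_one (hγ _).le
  have hle : ∑ j ∈ Finset.range n, T j ≤ Q (σ^[n] ω) := by
    rw [hQ]
    exact Summable.sum_le_tsum (Finset.range n) (fun j _ => hTnn j) (hQsum _)
  calc ‖(∑ j ∈ Finset.range n, φ j (fIter j ω y)) -
        ∑ j ∈ Finset.range n, φ j (fIter j ω y')‖
      ≤ ∑ j ∈ Finset.range n,
        d ^ α * (H (σ^[j] ω) * ((∏ l ∈ Finset.Ico j n, γ (σ^[l] ω)) ^ α)⁻¹) := hsum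
    _ = d ^ α * ∑ j ∈ Finset.range n, T j := by
        rw [← Finset.mul_sum, hreflect]
    _ ≤ d ^ α * Q (σ^[n] ω) := by
        apply mul_le_mul_of_nonneg_left hle (Real.rpow_nonneg hd0 α)
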